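/- For a ∈ (0,1) and b := a⁴ + a⁻⁴, the integral identity ∫₀^∞ 4 ds/√((b+2)s⁴ + 2(b−6)s² + b+2) = ∫_{−π/2}^{π/2} 2 dt/√(2cos 4t + b) holds (both sides defining the positive real period q₃(a)). -/

import Mathlib

/-! The substitution `s = tan t` maps `(0, π/2)` onto `(0, ∞)`, and with `c = cos t`,
`cos 4t = 8c⁴ - 8c² + 1` turns the quartic `(b+2)s⁴ + 2(b-6)s² + (b+2)` into
`(2 cos 4t + b) / c⁴`; its square root cancels the Jacobian `1 / c²`. The remaining integral over
`(0, π/2)` is half of the one over `(-π/2, π/2)` because the integrand is even. -/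

open Real MeasureTheory Set

theorem two_lt_add_inv {x : ℝ} (hx : 0 < x) (hx1 : x ≠ 1) : 2 < x + x⁻¹ := by
  have : x + x⁻¹ - 2 = (x - 1) ^ 2 / x := by field_simp; ring
  have : 0 < (x - 1) ^ 2 / x := div_pos (pow_two_pos_of_ne_zero (sub_ne_zero.2 hx1)) hx
  linarith

theorem tan_image_Ioo_zero_pi_div_two : tan '' Ioo 0 (π / 2) = Ioi 0 := by
  ext s
  refine ⟨?_, fun hs => ⟨arctan s, ⟨?_, arctan_lt_pi_div_two s⟩, tan_arctan s⟩⟩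
  · rintro ⟨t, ⟨ht0, ht1⟩, rfl⟩
    exact tan_pos_of_pos_of_lt_pi_div_two ht0 ht1
  · simpa using arctan_strictMono (mem_Ioi.1 hs)

theorem integral_Ioi_zero_eq_integral_comp_tan {E : Type*} [NormedAddCommGroup E]
    [NormedSpace ℝ E] (f : ℝ → E) :
    ∫ s in Ioi 0, f s = ∫ t in Ioo 0 (π / 2), (cos t ^ 2)⁻¹ • f (tan t) := by
  have hsub : Ioo 0 (π / 2) ⊆ Ioo (-(π / 2)) (π / 2) :=
    Ioo_subset_Ioo_left (by linarith [pi_pos])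
  have hcos : ∀ t ∈ Ioo 0 (π / 2), 0 < cos t := fun t ht => cos_pos_of_mem_Ioo (hsub ht)
  rw [← tan_image_Ioo_zero_pi_div_two,
    integral_image_eq_integral_abs_deriv_smul measurableSet_Ioo
      (fun t ht => (hasDerivAt_tan (hcos t ht).ne').hasDerivWithinAt) (injOn_tan.mono hsub)]
  refine setIntegral_congr_fun measurableSet_Ioo fun t ht => ?_
  rw [abs_of_pos (by have := hcos t ht; positivity), one_div]

theorem cos_four_mul_eq (t : ℝ) : cos (4 * t) = 8 * cos t ^ 4 - 8 * cos t ^ 2 + 1 := by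
  rw [show 4 * t = 2 * (2 * t) by ring, cos_two_mul, cos_two_mul]
  ring

theorem quartic_tan_eq (b : ℝ) {t : ℝ} (ht : cos t ≠ 0) :
    (b + 2) * tan t ^ 4 + 2 * (b - 6) * tan t ^ 2 + (b + 2)
      = (2 * cos (4 * t) + b) / cos t ^ 4 := by
  rw [tan_eq_sin_div_cos, cos_four_mul_eq, div_pow, div_pow,
    show sin t ^ 4 = (sin t ^ 2) ^ 2 by ring, sin_sq]
  field_simp
  ring

theorem inv_cos_sq_smul_div_sqrt_quartic_tan (b c : ℝ) {t : ℝ} (ht : cos t ≠ 0) :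
    (cos t ^ 2)⁻¹ • (c / √((b + 2) * tan t ^ 4 + 2 * (b - 6) * tan t ^ 2 + (b + 2)))
      = c / √(2 * cos (4 * t) + b) := by
  rw [quartic_tan_eq b ht, sqrt_div' _ (by positivity), show cos t ^ 4 = (cos t ^ 2) ^ 2 by ring,
    sqrt_sq (by positivity), smul_eq_mul]
  field_simp

theorem intervalIntegral.integral_neg_self_eq_two_smul_of_even {E : Type*}
    [NormedAddCommGroup E] [NormedSpace ℝ E] {f : ℝ → E} (hf : ∀ x, f (-x) = f x) {c : ℝ}
    (hfi : IntervalIntegrable f volume 0 c) :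
    ∫ x in -c..c, f x = (2 : ℝ) • ∫ x in 0..c, f x := by
  have hneg : ∫ x in -c..0, f x = ∫ x in 0..c, f x := by
    simpa [hf] using (intervalIntegral.integral_comp_neg (a := 0) (b := c) f).symm
  have hfi' : IntervalIntegrable f volume (-c) 0 := by
    simpa [hf] using ((IntervalIntegrable.iff_comp_neg (a := 0) (b := c)).1 hfi).symm
  rw [← intervalIntegral.integral_add_adjacent_intervals hfi' hfi, hneg, two_smul]

theorem statement19 (a : ℝ) (ha : a ∈ Set.Ioo (0:ℝ) 1) (b : ℝ)
    (hb : b = a ^ 4 + (a ^ 4)⁻¹) :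
    (∫ s in Set.Ioi (0:ℝ),
        4 / Real.sqrt ((b + 2) * s ^ 4 + 2 * (b - 6) * s ^ 2 + (b + 2)))
      = ∫ t in (-(π / 2))..(π / 2), 2 / Real.sqrt (2 * Real.cos (4 * t) + b) := by
  have hb2 : 2 < b := hb ▸ two_lt_add_inv (pow_pos ha.1 4)
    (pow_lt_one₀ ha.1.le ha.2 four_ne_zero).ne
  have hcont : Continuous fun t => 2 / √(2 * cos (4 * t) + b) :=
    .div continuous_const (by fun_prop) fun t =>
      (sqrt_pos.2 (by nlinarith [neg_one_le_cos (4 * t)])).ne'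
  have hsubst : ∫ s in Ioi 0, 4 / √((b + 2) * s ^ 4 + 2 * (b - 6) * s ^ 2 + (b + 2))
      = ∫ t in Ioo 0 (π / 2), 4 / √(2 * cos (4 * t) + b) := by
    rw [integral_Ioi_zero_eq_integral_comp_tan]
    refine setIntegral_congr_fun measurableSet_Ioo fun t ht => ?_
    exact inv_cos_sq_smul_div_sqrt_quartic_tan b 4
      (cos_pos_of_mem_Ioo ⟨by linarith [ht.1, pi_pos], ht.2⟩).ne'
  rw [hsubst, intervalIntegral.integral_neg_self_eq_two_smul_of_even
      (fun t => by rw [mul_neg, cos_neg]) (hcont.intervalIntegrable _ _),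
    intervalIntegral.integral_of_le (by positivity), integral_Ioc_eq_integral_Ioo, smul_eq_mul,
    ← integral_const_mul]
  congr with t
  ring
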